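/- Let K be a convex body in ℝⁿ. For every ε > 0 there exist m ∈ ℕ and a convex body K_m ⊂ ℝⁿ such that (i) K_m is uniquely determined among all convex bodies in ℝⁿ by its geometric moments of order at most m (any convex body L ⊂ ℝⁿ with μ_α(L) = μ_α(K_m) for all |α| ≤ m equals K_m), and (ii) the Hausdorff distance between K and K_m is at most ε. -/

import Mathlib

open MeasureTheory

/-- The geometric moment `μ_α(K) = ∫_K x^α dx` of a set `K ⊆ ℝⁿ`. -/
noncomputable def geomMoment {n : ℕ} (α : Fin n → ℕ) (K : Set (EuclideanSpace ℝ (Fin n))) : ℝ :=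
  ∫ x in K, ∏ i, (x i) ^ (α i)

/-- A convex body: a compact convex set with nonempty interior. -/
def IsConvexBody {n : ℕ} (K : Set (EuclideanSpace ℝ (Fin n))) : Prop :=
  IsCompact K ∧ Convex ℝ K ∧ (interior K).Nonempty

/-!
Cover the compact shell `{x | infDist x K = ε}` by finitely many open sets `1 < |gⱼ|`, where
each `gⱼ` is affine with `|gⱼ| < 1` on `K` (Hahn–Banach plus a rescaling). For `N` large the
polynomial `q = ∑ⱼ gⱼ ^ (2N)` is `< 1` on `K`, and the convex body `K_m = {q ≤ 1}` lies in the
convex, hence connected, polytope `⋂ⱼ {|gⱼ| ≤ 1}`, which contains `K` and misses the shell, so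
`K ⊆ K_m` lies within `ε` of `K`. A convex body `L` sharing the moments of `K_m` up to order
`2N = deg q` has the volume and the integral of `q` of `K_m`, so `L = K_m` by the bathtub
principle: `K_m` is the unique minimizer of `∫ q` among convex bodies of its volume.
-/

open Metric Set Filter MvPolynomial

section Geometry

variable {E : Type*} [NormedAddCommGroup E] [NormedSpace ℝ E]

theorem exists_affineMap_abs_lt_one_of_notMem {K : Set E} {x : E} (hKc : IsCompact K)
    (hKconv : Convex ℝ K) (hx : x ∉ K) :
    ∃ g : E →ᵃ[ℝ] ℝ, (∀ y ∈ K, |g y| < 1) ∧ 1 < |g x| := by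
  obtain ⟨f, u, hfK, hfx⟩ := geometric_hahn_banach_closed_point hKconv hKc.isClosed hx
  obtain ⟨b, hb⟩ := hKc.bddBelow_image f.continuous.continuousOn
  set l := min (b - 1) (u - 1)
  have hlu : 0 < u - l := by linarith [min_le_right (b - 1) (u - 1)]
  have hlK : ∀ y ∈ K, l < f y := fun y hy =>
    (min_le_left _ _).trans_lt (by linarith [hb ⟨y, hy, rfl⟩])
  -- `t ↦ (2t - (u + l)) / (u - l)` maps `(l, u)` onto `(-1, 1)`
  let g : E →ᵃ[ℝ] ℝ :=
    ((2 / (u - l)) • (f : E →ₗ[ℝ] ℝ)).toAffineMap + AffineMap.const ℝ E (-(u + l) / (u - l))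
  have hg : ∀ y, g y = (2 * f y - (u + l)) / (u - l) := fun y => by
    simp only [g, AffineMap.coe_add, LinearMap.coe_toAffineMap, LinearMap.coe_smul,
      ContinuousLinearMap.coe_coe, AffineMap.coe_const, Pi.add_apply, Pi.smul_apply, smul_eq_mul,
      Function.const_apply]
    field_simp
    ring
  refine ⟨g, fun y hy => ?_, ?_⟩
  · rw [hg, abs_div, abs_of_pos hlu, div_lt_one hlu, abs_lt]
    constructor <;> linarith [hlK y hy, hfK y hy]
  · rw [hg, abs_div, abs_of_pos hlu, one_lt_div hlu]
    exact lt_of_lt_of_le (by linarith) (le_abs_self _)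

theorem exists_finset_affineMap_abs_lt_one_of_disjoint [FiniteDimensional ℝ E] {K S : Set E}
    (hKc : IsCompact K) (hKconv : Convex ℝ K) (hS : IsCompact S) (hSK : Disjoint S K) :
    ∃ J : Finset (E →ᵃ[ℝ] ℝ), (∀ g ∈ J, ∀ y ∈ K, |g y| < 1) ∧ ∀ x ∈ S, ∃ g ∈ J, 1 < |g x| := by
  classical
  have hsep : ∀ x ∈ S, ∃ g : E →ᵃ[ℝ] ℝ, (∀ y ∈ K, |g y| < 1) ∧ 1 < |g x| := fun x hx =>
    exists_affineMap_abs_lt_one_of_notMem hKc hKconv (hSK.notMem_of_mem_left hx)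
  choose! g hgK hgx using hsep
  obtain ⟨t, htS, hcover⟩ := hS.elim_nhds_subcover (fun x => {y | 1 < |g x y|}) fun x hx =>
    (isOpen_lt continuous_const (g x).continuous_of_finiteDimensional.abs).mem_nhds (hgx x hx)
  refine ⟨t.image g, Finset.forall_mem_image.2 fun x hx => hgK x (htS x hx), fun x hx => ?_⟩
  obtain ⟨z, hz, hxz⟩ := mem_iUnion₂.1 (hcover hx)
  exact ⟨g z, Finset.mem_image_of_mem g hz, hxz⟩

end Geometry

theorem IsCompact.eventually_sum_abs_pow_lt_one {X ι : Type*} [TopologicalSpace X] {K : Set X}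
    (hK : IsCompact K) (J : Finset ι) {g : ι → X → ℝ} (hg : ∀ j ∈ J, ContinuousOn (g j) K)
    (h : ∀ j ∈ J, ∀ y ∈ K, |g j y| < 1) :
    ∀ᶠ N in atTop, ∀ y ∈ K, ∑ j ∈ J, |g j y| ^ N < 1 := by
  rcases K.eq_empty_or_nonempty with rfl | hne
  · simp
  have : Nonempty X := ⟨hne.some⟩
  have hmax : ∀ j ∈ J, ∃ z ∈ K, IsMaxOn (fun y => |g j y|) K z := fun j hj =>
    hK.exists_isMaxOn hne (hg j hj).abs
  choose! z hzK hz using hmax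
  have hlim : Tendsto (fun N => ∑ j ∈ J, |g j (z j)| ^ N) atTop (nhds 0) := by
    simpa using tendsto_finsetSum J fun j hj =>
      tendsto_pow_atTop_nhds_zero_of_lt_one (abs_nonneg _) (h j hj _ (hzK j hj))
  filter_upwards [hlim.eventually_lt_const one_pos] with N hN y hy
  calc ∑ j ∈ J, |g j y| ^ N ≤ ∑ j ∈ J, |g j (z j)| ^ N :=
        Finset.sum_le_sum fun j hj => pow_le_pow_left₀ (abs_nonneg _) (hz j hj hy) N
    _ < 1 := hN

section InfDist

variable {α : Type*} [PseudoMetricSpace α]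

theorem IsPreconnected.infDist_le_of_infDist_ne {P K : Set α} {ε : ℝ} (hP : IsPreconnected P)
    (hKP : K ⊆ P) (hε : 0 ≤ ε) (hne : ∀ x ∈ P, infDist x K ≠ ε) {x : α} (hx : x ∈ P) :
    infDist x K ≤ ε := by
  rcases K.eq_empty_or_nonempty with rfl | ⟨y, hy⟩
  · simpa using hε
  by_contra! hlt
  obtain ⟨w, hwP, hw⟩ := hP.intermediate_value (hKP hy) hx (continuous_infDist_pt K).continuousOn
    ⟨(infDist_zero_of_mem hy).trans_le hε, hlt.le⟩
  exact hne w hwP hw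

theorem IsCompact.isBounded_setOf_infDist_le {K : Set α} (hK : IsCompact K) (hne : K.Nonempty)
    (ε : ℝ) : Bornology.IsBounded {x | infDist x K ≤ ε} :=
  hK.isBounded.cthickening.subset fun x hx => by
    obtain ⟨y, hy, hxy⟩ := hK.exists_infDist_eq_dist hne x
    exact mem_cthickening_of_dist_le x y ε K hy (hxy ▸ hx)

end InfDist

section Approximation

variable {E : Type*} [NormedAddCommGroup E] [NormedSpace ℝ E] [FiniteDimensional ℝ E]

theorem exists_sum_pow_affineMap_lt_one_on_and_infDist_le {K : Set E} (hKc : IsCompact K)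
    (hKconv : Convex ℝ K) (hne : K.Nonempty) {ε : ℝ} (hε : 0 < ε) :
    ∃ (J : Finset (E →ᵃ[ℝ] ℝ)) (N : ℕ), (∀ y ∈ K, ∑ g ∈ J, g y ^ (2 * N) < 1) ∧
      ∀ x, ∑ g ∈ J, g x ^ (2 * N) ≤ 1 → infDist x K ≤ ε := by
  set S := {x | infDist x K = ε}
  have hS : IsCompact S := isCompact_of_isClosed_isBounded
    (isClosed_eq (continuous_infDist_pt K) continuous_const)
    ((hKc.isBounded_setOf_infDist_le hne ε).subset fun x hx => le_of_eq hx)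
  have hSK : Disjoint S K := disjoint_left.2 fun x hx hxK =>
    hε.ne' (hx.symm.trans (infDist_zero_of_mem hxK))
  obtain ⟨J, hJK, hJS⟩ := exists_finset_affineMap_abs_lt_one_of_disjoint hKc hKconv hS hSK
  obtain ⟨N₀, hN₀⟩ := eventually_atTop.1 <| hKc.eventually_sum_abs_pow_lt_one J
    (fun g _ => g.continuous_of_finiteDimensional.continuousOn) hJK
  refine ⟨J, N₀ + 1, fun y hy => ?_, fun x hx => ?_⟩
  · simpa only [(even_two_mul _).pow_abs] using hN₀ (2 * (N₀ + 1)) (by omega) y hy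
  set P := ⋂ g ∈ J, g ⁻¹' Icc (-1) 1
  have hP : Convex ℝ P := convex_iInter₂ fun g _ => (convex_Icc _ _).affine_preimage g
  have hKP : K ⊆ P := fun y hy => mem_iInter₂.2 fun g hg =>
    abs_le.1 (hJK g hg y hy).le
  have hPS : ∀ z ∈ P, infDist z K ≠ ε := fun z hz hzS => by
    obtain ⟨g, hg, hgz⟩ := hJS z hzS
    exact hgz.not_ge (abs_le.2 (mem_iInter₂.1 hz g hg))
  refine hP.isPreconnected.infDist_le_of_infDist_ne hKP hε.le hPS (mem_iInter₂.2 fun g hg => ?_)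
  have hg : g x ^ (2 * (N₀ + 1)) ≤ 1 :=
    (Finset.single_le_sum (fun g _ => (even_two_mul _).pow_nonneg (g x)) hg).trans hx
  rw [← (even_two_mul _).pow_abs, pow_le_one_iff_of_nonneg (abs_nonneg _) (by omega)] at hg
  exact abs_le.1 hg

end Approximation

theorem convexOn_sum_pow_affineMap {E : Type*} [AddCommGroup E] [Module ℝ E]
    (J : Finset (E →ᵃ[ℝ] ℝ)) (N : ℕ) :
    ConvexOn ℝ univ fun x => ∑ g ∈ J, g x ^ (2 * N) := by
  have := Finset.sum_induction (fun g : E →ᵃ[ℝ] ℝ => fun x => g x ^ (2 * N)) (ConvexOn ℝ univ)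
    (s := J) (fun _ _ => ConvexOn.add) (convexOn_const 0 convex_univ)
    fun g _ => (Even.convexOn_pow (even_two_mul N)).comp_affineMap g
  simpa [Finset.sum_fn] using this

namespace IsConvexBody

variable {n : ℕ} {L : Set (EuclideanSpace ℝ (Fin n))}

theorem subset_of_measure_diff_eq_zero {M : Set (EuclideanSpace ℝ (Fin n))} (hL : IsConvexBody L)
    (hM : IsClosed M) (h : volume (L \ M) = 0) : L ⊆ M := by
  have hint : interior L ⊆ M := fun x hxL => by
    by_contra hxM
    exact (isOpen_interior.sdiff hM).measure_ne_zero volume ⟨x, hxL, hxM⟩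
      (measure_mono_null (sdiff_subset_sdiff_left interior_subset) h)
  calc L ⊆ closure (interior L) := by
        rw [hL.2.1.closure_interior_eq_closure_of_nonempty_interior hL.2.2]
        exact subset_closure
    _ ⊆ M := closure_minimal hint hM

theorem eq_setOf_le_of_setIntegral_eq {q : EuclideanSpace ℝ (Fin n) → ℝ} {c : ℝ}
    (hL : IsConvexBody L) (hM : IsConvexBody {x | q x ≤ c}) (hq : Continuous q)
    (hvol : volume.real L = volume.real {x | q x ≤ c})
    (hint : ∫ x in L, q x = ∫ x in {x | q x ≤ c}, q x) : L = {x | q x ≤ c} := by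
  set M := {x | q x ≤ c}
  have hLm : MeasurableSet L := hL.1.isClosed.measurableSet
  have hMm : MeasurableSet M := hM.1.isClosed.measurableSet
  have hqc : ∀ {A}, IsCompact A → IntegrableOn (fun x => q x - c) A := fun hA =>
    (hq.sub continuous_const).continuousOn.integrableOn_compact hA
  have heq : ∫ x in L, (q x - c) = ∫ x in M, (q x - c) := by
    rw [integral_sub (hq.continuousOn.integrableOn_compact hL.1)
        (integrableOn_const hL.1.measure_lt_top.ne),
      integral_sub (hq.continuousOn.integrableOn_compact hM.1)
        (integrableOn_const hM.1.measure_lt_top.ne),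
      setIntegral_const, setIntegral_const, hint, hvol]
  have hdiff : ∫ x in L \ M, (q x - c) = ∫ x in M \ L, (q x - c) := by
    have hLsplit := integral_inter_add_sdiff hMm (hqc hL.1)
    have hMsplit := integral_inter_add_sdiff hLm (hqc hM.1)
    rw [inter_comm] at hMsplit
    linarith
  have hpos : ∀ x ∈ L \ M, 0 < q x - c := fun x hx => sub_pos.2 (not_le.1 hx.2)
  have hzero : ∫ x in L \ M, (q x - c) = 0 :=
    le_antisymm (hdiff ▸ setIntegral_nonpos (hMm.diff hLm) fun x hx => sub_nonpos.2 hx.1)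
      (setIntegral_nonneg (hLm.diff hMm) fun x hx => (hpos x hx).le)
  have hLM : L ⊆ M := by
    refine hL.subset_of_measure_diff_eq_zero hM.1.isClosed ?_
    have hsupp : Function.support (fun x => q x - c) ∩ (L \ M) = L \ M :=
      inter_eq_right.2 fun x hx => (hpos x hx).ne'
    have := (setIntegral_pos_iff_support_of_nonneg_ae
      ((ae_restrict_iff' (hLm.diff hMm)).2 (.of_forall fun x hx => (hpos x hx).le))
      (hqc hL.1 |>.mono_set sdiff_subset)).not.1 hzero.not_gt
    rwa [hsupp, not_lt, nonpos_iff_eq_zero] at this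
  have hML : M ⊆ L := hM.subset_of_measure_diff_eq_zero hL.1.isClosed <| by
    rw [← measureReal_eq_zero_iff (measure_ne_top_of_subset sdiff_subset hM.1.measure_lt_top.ne),
      measureReal_sdiff hLM hLm hM.1.measure_lt_top.ne, hvol, sub_self]
  exact hLM.antisymm hML

end IsConvexBody

section Moments

variable {n : ℕ}

def IsPolynomialOfDegreeLE (m : ℕ) (f : EuclideanSpace ℝ (Fin n) → ℝ) : Prop :=
  ∃ p : MvPolynomial (Fin n) ℝ, p.totalDegree ≤ m ∧ ∀ x, f x = eval (fun i => x i) p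

def IsDeterminedByMoments (m : ℕ) (K : Set (EuclideanSpace ℝ (Fin n))) : Prop :=
  ∀ L, IsConvexBody L → (∀ α : Fin n → ℕ, ∑ i, α i ≤ m → geomMoment α L = geomMoment α K) → L = K

theorem geomMoment_zero (K : Set (EuclideanSpace ℝ (Fin n))) :
    geomMoment 0 K = volume.real K := by
  simp [geomMoment]

theorem setIntegral_eval_eq_sum_geomMoment {L : Set (EuclideanSpace ℝ (Fin n))}
    (hL : IsCompact L) (p : MvPolynomial (Fin n) ℝ) :
    ∫ x in L, eval (fun i => x i) p = ∑ d ∈ p.support, p.coeff d * geomMoment (fun i => d i) L := by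
  simp_rw [eval_eq', geomMoment, ← integral_const_mul]
  exact integral_finsetSum _ fun d _ =>
    (by fun_prop : Continuous fun x : EuclideanSpace ℝ (Fin n) => p.coeff d * ∏ i, x i ^ d i)
      |>.continuousOn.integrableOn_compact hL

namespace IsPolynomialOfDegreeLE

variable {m : ℕ} {f : EuclideanSpace ℝ (Fin n) → ℝ}

theorem continuous (hf : IsPolynomialOfDegreeLE m f) : Continuous f := by
  obtain ⟨p, -, hp⟩ := hf
  rw [funext hp]
  exact (continuous_eval p).comp (by fun_prop)

theorem setIntegral_eq_of_geomMoment_eq (hf : IsPolynomialOfDegreeLE m f)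
    {L M : Set (EuclideanSpace ℝ (Fin n))} (hL : IsCompact L) (hM : IsCompact M)
    (hmom : ∀ α : Fin n → ℕ, ∑ i, α i ≤ m → geomMoment α L = geomMoment α M) :
    ∫ x in L, f x = ∫ x in M, f x := by
  obtain ⟨p, hpm, hp⟩ := hf
  simp only [hp, setIntegral_eval_eq_sum_geomMoment hL, setIntegral_eval_eq_sum_geomMoment hM]
  refine Finset.sum_congr rfl fun d hd => congrArg _ (hmom _ ?_)
  have hdeg := le_totalDegree hd
  rw [Finsupp.sum_fintype _ _ fun _ => rfl] at hdeg
  exact hdeg.trans hpm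

theorem isDeterminedByMoments_setOf_le (hf : IsPolynomialOfDegreeLE m f) {c : ℝ}
    (hM : IsConvexBody {x | f x ≤ c}) : IsDeterminedByMoments m {x | f x ≤ c} :=
  fun L hL hmom => hL.eq_setOf_le_of_setIntegral_eq hM hf.continuous
    (by simpa only [geomMoment_zero] using hmom 0 (by simp))
    (hf.setIntegral_eq_of_geomMoment_eq hL.1 hM.1 hmom)

theorem affineMap (g : EuclideanSpace ℝ (Fin n) →ᵃ[ℝ] ℝ) : IsPolynomialOfDegreeLE 1 g := by
  refine ⟨∑ i, C (g.linear (EuclideanSpace.single i 1)) * X i + C (g 0), ?_, fun x => ?_⟩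
  · refine (totalDegree_add _ _).trans (max_le ?_ (by simp))
    refine (totalDegree_finsetSum _ _).trans (Finset.sup_le fun i _ => ?_)
    exact (totalDegree_mul _ _).trans (by rw [totalDegree_C, totalDegree_X])
  · have hx : x = ∑ i, x i • EuclideanSpace.single i (1 : ℝ) := by
      ext i
      simp [Pi.single_apply]
    conv_lhs => rw [congrFun g.decomp x, hx]
    simp [mul_comm]

theorem pow (hf : IsPolynomialOfDegreeLE m f) (k : ℕ) :
    IsPolynomialOfDegreeLE (k * m) fun x => f x ^ k := by
  obtain ⟨p, hpm, hp⟩ := hf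
  exact ⟨p ^ k, (totalDegree_pow p k).trans (Nat.mul_le_mul_left k hpm), fun x => by simp [hp]⟩

theorem sum {ι : Type*} (J : Finset ι) {f : ι → EuclideanSpace ℝ (Fin n) → ℝ}
    (hf : ∀ j ∈ J, IsPolynomialOfDegreeLE m (f j)) :
    IsPolynomialOfDegreeLE m fun x => ∑ j ∈ J, f j x := by
  choose! p hpm hp using hf
  refine ⟨∑ j ∈ J, p j, (totalDegree_finsetSum _ _).trans (Finset.sup_le hpm), fun x => ?_⟩
  simp only [map_sum]
  exact Finset.sum_congr rfl fun j hj => hp j hj x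

end IsPolynomialOfDegreeLE

end Moments

theorem isConvexBody_setOf_le {n : ℕ} {q : EuclideanSpace ℝ (Fin n) → ℝ} {c : ℝ}
    (hq : Continuous q) (hconv : ConvexOn ℝ univ q) (hbdd : Bornology.IsBounded {x | q x ≤ c})
    (hlt : ∃ x, q x < c) : IsConvexBody {x | q x ≤ c} := by
  obtain ⟨x, hx⟩ := hlt
  refine ⟨isCompact_of_isClosed_isBounded (isClosed_le hq continuous_const) hbdd,
    by simpa using hconv.convex_le c, ⟨x, ?_⟩⟩
  exact interior_maximal (fun y (hy : q y < c) => hy.le) (isOpen_lt hq continuous_const) hx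

/-- The convex bodies uniquely determined among all convex bodies in `ℝⁿ`
by finitely many geometric moments form a dense subset of all convex bodies: for every
convex body `K` and `ε > 0` there are `m ∈ ℕ` and a convex body `K_m`, uniquely determined
among all convex bodies by its moments of order at most `m`, with `d_H(K, K_m) ≤ ε`. -/
theorem dense_uniquely_determined {n : ℕ}
    (K : Set (EuclideanSpace ℝ (Fin n))) (hK : IsConvexBody K) (ε : ℝ) (hε : 0 < ε) :
    ∃ (m : ℕ) (Km : Set (EuclideanSpace ℝ (Fin n))),
      IsConvexBody Km ∧
      (∀ L : Set (EuclideanSpace ℝ (Fin n)), IsConvexBody L →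
        (∀ α : Fin n → ℕ, (∑ i, α i) ≤ m → geomMoment α L = geomMoment α Km) → L = Km) ∧
      Metric.hausdorffDist K Km ≤ ε := by
  obtain ⟨hKc, hKconv, hKint⟩ := hK
  have hne : K.Nonempty := hKint.mono interior_subset
  obtain ⟨J, N, hK_lt, h_dist⟩ :=
    exists_sum_pow_affineMap_lt_one_on_and_infDist_le hKc hKconv hne hε
  have hpoly : IsPolynomialOfDegreeLE (2 * N) fun x => ∑ g ∈ J, g x ^ (2 * N) :=
    .sum J fun g _ => by simpa using (IsPolynomialOfDegreeLE.affineMap g).pow (2 * N)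
  have hKm : IsConvexBody {x | ∑ g ∈ J, g x ^ (2 * N) ≤ 1} :=
    isConvexBody_setOf_le hpoly.continuous (convexOn_sum_pow_affineMap J N)
      ((hKc.isBounded_setOf_infDist_le hne ε).subset h_dist) (hne.imp hK_lt)
  refine ⟨2 * N, _, hKm, hpoly.isDeterminedByMoments_setOf_le hKm,
    hausdorffDist_le_of_infDist hε.le
      (fun x hx => (infDist_zero_of_mem (s := {y | _ ≤ 1}) (hK_lt x hx).le).trans_le hε.le)
      h_dist⟩
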